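/- The translation Tr := h ∘ f is Boolean preserving with respect to ⊢d3: for all Lω-sentences φ, ψ one has ⊢d3 Tr(φ∧ψ) ↔ (Tr(φ) ∧ Tr(ψ)) and ⊢d3 Tr(φ→ψ) → (Tr(φ) → Tr(ψ)); moreover SAx* ⊢d3 Tr(¬φ) → ¬Tr(φ) for every Lω-sentence φ. -/

import Mathlib

/- Core: the logic Ld3 : syntax, proof system, semantics, Gödel numbering. -/

inductive Var : Type
  | x
  | y
  | z
deriving DecidableEq

def Var.toNat : Var → Nat
  | .x => 0
  | .y => 1
  | .z => 2

/-- Formulas of the logic `Ld3`: one atomic formula `P(x,y,z)`, connectives `∨, ¬`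
and quantifiers `∃x, ∃y, ∃z`. -/
inductive Fmd3 : Type
  | P : Fmd3
  | or : Fmd3 → Fmd3 → Fmd3
  | not : Fmd3 → Fmd3
  | ex : Var → Fmd3 → Fmd3
deriving DecidableEq

namespace Fmd3

def and (φ ψ : Fmd3) : Fmd3 := .not (.or (.not φ) (.not ψ))

def imp (φ ψ : Fmd3) : Fmd3 := .or (.not φ) ψ

def iff (φ ψ : Fmd3) : Fmd3 := (φ.imp ψ).and (ψ.imp φ)

def all (v : Var) (φ : Fmd3) : Fmd3 := .not (.ex v (.not φ))

def freeVars : Fmd3 → Finset Var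
  | .P => {Var.x, Var.y, Var.z}
  | .or a b => a.freeVars ∪ b.freeVars
  | .not a => a.freeVars
  | .ex v a => a.freeVars.erase v

/-- `Fmd3⁰`: sentences. -/
def IsSentence (φ : Fmd3) : Prop := φ.freeVars = ∅

/-- `Fmd3¹`: formulas whose only free variable is `x`. -/
def OneFree (φ : Fmd3) : Prop := φ.freeVars ⊆ {Var.x}

/-- `φ` is a propositional tautology: every Boolean valuation that respects
`∨` and `¬` (treating other formulas as propositional atoms) makes `φ` true. -/
def Taut (φ : Fmd3) : Prop :=
  ∀ v : Fmd3 → Bool,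
    (∀ a b : Fmd3, v (.or a b) = (v a || v b)) →
    (∀ a : Fmd3, v (.not a) = !(v a)) →
    v φ = true

/-- Satisfaction of an `Fmd3` formula in a model `(M, R)` under evaluation `e`. -/
def Sat (M : Type) (R : M → M → M → Prop) : Fmd3 → (Var → M) → Prop
  | .P, e => R (e .x) (e .y) (e .z)
  | .or a b, e => Sat M R a e ∨ Sat M R b e
  | .not a, e => ¬ Sat M R a e
  | .ex v a, e => ∃ m : M, Sat M R a (Function.update e v m)

/-- A standard (injective) Gödel numbering of `Fmd3`. -/
def encode : Fmd3 → Nat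
  | .P => 0
  | .or a b => 4 * Nat.pair a.encode b.encode + 1
  | .not a => 4 * a.encode + 2
  | .ex v a => 4 * Nat.pair v.toNat a.encode + 3

end Fmd3

/-- The Hilbert-style proof system `⊢d3`, with rules Modus Ponens and Generalization,
and axiom schemes ((1))–((7)). -/
inductive Prf (T : Set Fmd3) : Fmd3 → Prop
  | hyp {φ : Fmd3} : φ ∈ T → Prf T φ
  | taut {φ : Fmd3} : φ.Taut → Prf T φ
  | ax2 (v : Var) (φ ψ : Fmd3) :
      Prf T ((Fmd3.all v (φ.imp ψ)).imp ((Fmd3.ex v φ).imp (Fmd3.ex v ψ)))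
  | ax3 (v : Var) (φ : Fmd3) : Prf T (φ.imp (.ex v φ))
  | ax4 (v : Var) (φ : Fmd3) : Prf T ((Fmd3.ex v (.ex v φ)).imp (.ex v φ))
  | ax5 (v : Var) (φ ψ : Fmd3) :
      Prf T ((Fmd3.ex v (φ.or ψ)).iff ((Fmd3.ex v φ).or (.ex v ψ)))
  | ax6 (v : Var) (φ : Fmd3) :
      Prf T ((Fmd3.ex v (.not (.ex v φ))).imp (.not (.ex v φ)))
  | ax7 (v w : Var) (φ : Fmd3) :
      Prf T ((Fmd3.ex v (.ex w φ)).imp (.ex w (.ex v φ)))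
  | mp {φ ψ : Fmd3} : Prf T (φ.imp ψ) → Prf T φ → Prf T ψ
  | gen {φ : Fmd3} (v : Var) : Prf T φ → Prf T (.all v φ)

/-- Semantic consequence for `Ld3`: every model of `T` satisfies `φ` under every
evaluation. -/
def SemConsD (T : Set Fmd3) (φ : Fmd3) : Prop :=
  ∀ (M : Type) (_ : Nonempty M) (R : M → M → M → Prop),
    (∀ ψ ∈ T, ∀ e : Var → M, ψ.Sat M R e) → ∀ e : Var → M, φ.Sat M R e

/-- Validity for `Ld3`. -/
def ValidD (φ : Fmd3) : Prop := SemConsD ∅ φ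

/-- A set of `Fmd3`-formulas is recursive (decidable w.r.t. the standard
Gödel numbering). -/
def RecSetD (S : Set Fmd3) : Prop :=
  ∃ g : Nat → Bool, Computable g ∧ ∀ φ : Fmd3, φ ∈ S ↔ g φ.encode = true

/- Parameter formulas δxy, δxz, p0, p1; simulated equality and substitution;
pairing axioms Ax and SAx; the relation-algebra and cylindric-algebra reducts. -/

structure Params where
  dxy : Fmd3
  dxz : Fmd3
  p0 : Fmd3
  p1 : Fmd3

/-- The required free-variable sets of the parameter formulas. -/
def GoodParams (P : Params) : Prop :=
  P.dxy.freeVars = {Var.x, Var.y} ∧ P.dxz.freeVars = {Var.x, Var.z} ∧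
    P.p0.freeVars = {Var.x, Var.y} ∧ P.p1.freeVars = {Var.x, Var.y}

/-- A provably true formula. -/
def trueF (P : Params) : Fmd3 := P.dxy.or P.dxy.not

/-- Simulated equality `u ≐ v` between variables. -/
def eqvF (P : Params) : Var → Var → Fmd3
  | .x, .y => P.dxy
  | .y, .x => P.dxy
  | .x, .z => P.dxz
  | .z, .x => P.dxz
  | .y, .z => .ex .x (P.dxy.and P.dxz)
  | .z, .y => .ex .x (P.dxy.and P.dxz)
  | _, _ => trueF P

/- Tarski-style simulated substitution `φ⟨u,v⟩` for `φ` with free variables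
among `{x,y}`. -/
def sXZ (P : Params) (φ : Fmd3) : Fmd3 := .ex .y ((eqvF P .y .z).and φ)
def sYZ (P : Params) (φ : Fmd3) : Fmd3 := .ex .x ((eqvF P .x .y).and (sXZ P φ))
def sYX (P : Params) (φ : Fmd3) : Fmd3 := .ex .z ((eqvF P .x .z).and (sYZ P φ))
def sZX (P : Params) (φ : Fmd3) : Fmd3 := .ex .y ((eqvF P .y .z).and (sYX P φ))
def sZY (P : Params) (φ : Fmd3) : Fmd3 := .ex .x ((eqvF P .x .z).and φ)
def sXX (P : Params) (φ : Fmd3) : Fmd3 := .ex .y ((eqvF P .x .y).and φ)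
def sYY (P : Params) (φ : Fmd3) : Fmd3 := .ex .x ((eqvF P .x .y).and φ)
def sZZ (P : Params) (φ : Fmd3) : Fmd3 := .ex .x ((eqvF P .x .z).and (sXX P φ))

def subst2 (P : Params) (φ : Fmd3) : Var → Var → Fmd3
  | .x, .y => φ
  | .x, .z => sXZ P φ
  | .y, .z => sYZ P φ
  | .y, .x => sYX P φ
  | .z, .x => sZX P φ
  | .z, .y => sZY P φ
  | .x, .x => sXX P φ
  | .y, .y => sYY P φ
  | .z, .z => sZZ P φ

/-- The third variable, distinct from two given distinct variables. -/
def third : Var → Var → Var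
  | .x, .y => .z
  | .y, .x => .z
  | .x, .z => .y
  | .z, .x => .y
  | .y, .z => .x
  | .z, .y => .x
  | v, _ => v

def pform (P : Params) (k : Bool) (u v : Var) : Fmd3 :=
  subst2 P (if k then P.p1 else P.p0) u v

/-- `u_i ≐ v_∅` for distinct `u`, `v`, where the binary sequence `i` is given
in reverse order. -/
def peqDrev (P : Params) (u v : Var) : List Bool → Fmd3
  | [] => eqvF P u v
  | [k] => pform P k u v
  | k :: rest => .ex (third u v) ((peqDrev P u (third u v) rest).and (pform P k (third u v) v))

def peqD2 (P : Params) (u v : Var) (i j : List Bool) : Fmd3 :=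
  match j with
  | [] => peqDrev P u v i.reverse
  | _ => .ex (third u v)
      ((peqDrev P u (third u v) i.reverse).and (peqDrev P v (third u v) j.reverse))

/-- The formula `u_i ≐ v_j` simulating `p_{i_n} ⋯ p_{i_0} u = p_{j_k} ⋯ p_{j_0} v`. -/
def peq (P : Params) (u : Var) (i : List Bool) (v : Var) (j : List Bool) : Fmd3 :=
  if i = [] ∧ j = [] then eqvF P u v
  else if u = v then
    match u with
    | .x => .ex .y ((eqvF P .x .y).and (peqD2 P .x .y i j))
    | .y => .ex .x ((eqvF P .x .y).and (peqD2 P .x .y i j))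
    | .z => .ex .x ((peqDrev P .z .x i.reverse).and (peqDrev P .z .x j.reverse))
  else peqD2 P u v i j

def conjF (P : Params) : List Fmd3 → Fmd3
  | [] => trueF P
  | [a] => a
  | a :: rest => a.and (conjF P rest)

def vars3 : List Var := [.x, .y, .z]

def seqsLen : Nat → List (List Bool)
  | 0 => [[]]
  | n + 1 => (seqsLen n).flatMap fun l => [false :: l, true :: l]

/-- `H`: all binary sequences of length at most 3. -/
def seqH : List (List Bool) := seqsLen 0 ++ seqsLen 1 ++ seqsLen 2 ++ seqsLen 3

def seqH2 : List (List Bool) := seqsLen 0 ++ seqsLen 1 ++ seqsLen 2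

/-- (A1): transitivity of `≐`. -/
def axA1 (P : Params) : List Fmd3 :=
  vars3.flatMap fun u => vars3.flatMap fun v => vars3.flatMap fun w =>
    seqH.flatMap fun i => seqH.flatMap fun j => seqH.map fun k =>
      ((peq P u i v j).and (peq P v j w k)).imp (peq P u i w k)

/-- (A2): congruence of `≐` w.r.t. the projections. -/
def axA2 (P : Params) : List Fmd3 :=
  vars3.flatMap fun u => vars3.flatMap fun v =>
    seqH2.flatMap fun i => seqH2.flatMap fun j => [false, true].map fun k =>
      ((peq P u i v j).and (peq P u (i ++ [k]) u (i ++ [k]))).imp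
        (peq P u (i ++ [k]) v (j ++ [k]))

/-- (A3): existence of pairs. -/
def axA3 (P : Params) : List Fmd3 :=
  vars3.flatMap fun u => vars3.flatMap fun v =>
    (vars3.filter fun w => decide (w ≠ u ∧ w ≠ v)).flatMap fun w =>
      seqH.flatMap fun i => seqH.map fun j =>
        ((peq P u i u i).and (peq P v j v j)).imp
          (.ex w ((peq P w [false] u i).and (peq P w [true] v j)))

/-- (A4): `∃w (u ≐ w)`. -/
def axA4 (P : Params) : List Fmd3 :=
  vars3.flatMap fun u => vars3.map fun w => .ex w (eqvF P u w)

/-- The pairing axiom `Ax`. -/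
def AxF (P : Params) : Fmd3 := conjF P (axA1 P ++ axA2 P ++ axA3 P ++ axA4 P)

/-- (A5), first half: uniqueness of pairs. -/
def axA5a (P : Params) : Fmd3 :=
  ((peq P .x [false] .y [false]).and (peq P .x [true] .y [true])).imp (eqvF P .x .y)

/-- (A5), second half: the two projections have the same domain. -/
def axA5b (P : Params) : Fmd3 :=
  (peq P .x [false] .x [false]).iff (peq P .x [true] .x [true])

/-- The strong pairing axiom `SAx`. -/
def SAxF (P : Params) : Fmd3 := (AxF P).and ((axA5a P).and (axA5b P))

/-- `pair := ∃y p0 ∧ ∃y p1`. -/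
def pairF (P : Params) : Fmd3 := (Fmd3.ex .y P.p0).and (.ex .y P.p1)

/-- `φu_i := ∃x(x ≐ u_i ∧ φ)` for `u ∈ {y,z}`. -/
def appA (P : Params) (φ : Fmd3) (u : Var) (i : List Bool) : Fmd3 :=
  .ex .x ((peq P .x [] u i).and φ)

/-- Relation composition `φ ∘ ψ`. -/
def compF (P : Params) (φ ψ : Fmd3) : Fmd3 :=
  .ex .y ((appA P φ .y [false]).and ((appA P ψ .y [true]).and
    ((peq P .x [false] .y [false, false]).and
      ((peq P .y [false, true] .y [true, false]).and (peq P .y [true, true] .x [true])))))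

/-- Converse `φ⌣`. -/
def convF (P : Params) (φ : Fmd3) : Fmd3 :=
  .ex .y ((appA P φ .y []).and ((peq P .y [false] .x [true]).and (peq P .y [true] .x [false])))

/-- Identity `Id := x_0 ≐ x_1`. -/
def IdF (P : Params) : Fmd3 := peq P .x [false] .x [true]

/-- Complement `−φ := pair ∧ ¬φ`. -/
def negF (P : Params) (φ : Fmd3) : Fmd3 := (pairF P).and φ.not

/-- The universe `dra` of the relation algebra reduct. -/
def dra (P : Params) : Set Fmd3 :=
  {φ | ∃ ψ : Fmd3, ψ.OneFree ∧ Prf {AxF P} (φ.iff (compF P ψ (IdF P)))}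

/-- The congruence `φ ≡_Ax ψ`. -/
def REqv (P : Params) (φ ψ : Fmd3) : Prop := Prf {AxF P} (φ.iff ψ)

/-- `Triplet := x_{11} ≐ x_{11}`. -/
def TripletF (P : Params) : Fmd3 := peq P .x [true, true] .x [true, true]

/-- `φx_i := ∃y(y ≐ x_i ∧ φy)` for `φ ∈ Fmd3¹`. -/
def appX (P : Params) (φ : Fmd3) (i : List Bool) : Fmd3 :=
  .ex .y ((peq P .y [] .x i).and (appA P φ .y []))

/-- `(0) := 0`, `(1) := 10`, `(2) := 11`. -/
def dgt (i : Fin 3) : List Bool :=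
  if i = 0 then [false] else if i = 1 then [true, false] else [true, true]

/-- The formula `T_i`. -/
def TiF (P : Params) (i : Fin 3) : Fmd3 :=
  (appX P (TripletF P) [false]).and ((appX P (TripletF P) [true]).and
    (conjF P (((List.finRange 3).filter fun j => decide (j ≠ i)).map fun j =>
      peq P .x (false :: dgt j) .x (true :: dgt j))))

/-- Cylindrification `c_i φ := φ ∘ T_i`. -/
def ciF (P : Params) (i : Fin 3) (φ : Fmd3) : Fmd3 := compF P φ (TiF P i)

/-- Diagonal `d_{ij} := Triplet x_1 ∧ x_{1(i)} ≐ x_{1(j)}`. -/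
def dijF (P : Params) (i j : Fin 3) : Fmd3 :=
  (appX P (TripletF P) [true]).and (peq P .x (true :: dgt i) .x (true :: dgt j))

/-- Complement in `Dca`: `−φ := Triplet x_1 ∧ ¬φ`. -/
def negC (P : Params) (φ : Fmd3) : Fmd3 := (appX P (TripletF P) [true]).and φ.not

/-- The universe `dca` of the cylindric reduct. -/
def dca (P : Params) : Set Fmd3 :=
  {φ | ∃ ψ : Fmd3, ψ.OneFree ∧
    Prf {SAxF P} (φ.iff ((appX P ψ [true]).and (appX P (TripletF P) [true])))}

/-- The congruence `φ ≡_SAx ψ`. -/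
def CEqv (P : Params) (φ ψ : Fmd3) : Prop := Prf {SAxF P} (φ.iff ψ)

/- The 3-variable restricted fragment L3 of first-order logic, the concrete
parameters built from the definition Δ of P, the pairing sentences π, π⁺,
and the translation h', h from L3 into Ld3. -/

inductive Fm3 : Type
  | mem : Fm3                -- the atomic formula ∈(x,y)
  | eq : Var → Var → Fm3
  | or : Fm3 → Fm3 → Fm3
  | not : Fm3 → Fm3
  | ex : Var → Fm3 → Fm3
deriving DecidableEq

namespace Fm3

def and (φ ψ : Fm3) : Fm3 := .not (.or (.not φ) (.not ψ))

def imp (φ ψ : Fm3) : Fm3 := .or (.not φ) ψ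

def iff (φ ψ : Fm3) : Fm3 := (φ.imp ψ).and (ψ.imp φ)

def all (v : Var) (φ : Fm3) : Fm3 := .not (.ex v (.not φ))

def freeVars : Fm3 → Finset Var
  | .mem => {Var.x, Var.y}
  | .eq u v => {u, v}
  | .or a b => a.freeVars ∪ b.freeVars
  | .not a => a.freeVars
  | .ex v a => a.freeVars.erase v

def IsSentence (φ : Fm3) : Prop := φ.freeVars = ∅

def Sat (M : Type) (E : M → M → Prop) : Fm3 → (Var → M) → Prop
  | .mem, e => E (e .x) (e .y)
  | .eq u v, e => e u = e v
  | .or a b, e => Sat M E a e ∨ Sat M E b e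
  | .not a, e => ¬ Sat M E a e
  | .ex v a, e => ∃ m : M, Sat M E a (Function.update e v m)

def encode : Fm3 → Nat
  | .mem => 0
  | .eq u v => 5 * Nat.pair u.toNat v.toNat + 1
  | .or a b => 5 * Nat.pair a.encode b.encode + 2
  | .not a => 5 * a.encode + 3
  | .ex v a => 5 * Nat.pair v.toNat a.encode + 4

end Fm3

/-- First-order semantic consequence for `L3`. -/
def SemCons3 (T : Set Fm3) (φ : Fm3) : Prop :=
  ∀ (M : Type) (_ : Nonempty M) (E : M → M → Prop),
    (∀ ψ ∈ T, ∀ e : Var → M, ψ.Sat M E e) → ∀ e : Var → M, φ.Sat M E e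

/- Tarski-style substitution in `L3` (with real equality). -/
def s3XZ (φ : Fm3) : Fm3 := .ex .y ((Fm3.eq .y .z).and φ)
def s3YZ (φ : Fm3) : Fm3 := .ex .x ((Fm3.eq .x .y).and (s3XZ φ))
def s3YX (φ : Fm3) : Fm3 := .ex .z ((Fm3.eq .x .z).and (s3YZ φ))
def s3ZX (φ : Fm3) : Fm3 := .ex .y ((Fm3.eq .y .z).and (s3YX φ))
def s3ZY (φ : Fm3) : Fm3 := .ex .x ((Fm3.eq .x .z).and φ)
def s3XX (φ : Fm3) : Fm3 := .ex .y ((Fm3.eq .x .y).and φ)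
def s3YY (φ : Fm3) : Fm3 := .ex .x ((Fm3.eq .x .y).and φ)
def s3ZZ (φ : Fm3) : Fm3 := .ex .x ((Fm3.eq .x .z).and (s3XX φ))

def subst3 (φ : Fm3) : Var → Var → Fm3
  | .x, .y => φ
  | .x, .z => s3XZ φ
  | .y, .z => s3YZ φ
  | .y, .x => s3YX φ
  | .z, .x => s3ZX φ
  | .z, .y => s3ZY φ
  | .x, .x => s3XX φ
  | .y, .y => s3YY φ
  | .z, .z => s3ZZ φ

/-- `u ∈ v` in `L3`. -/
def mem3 (u v : Var) : Fm3 := subst3 .mem u v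

/-- `x = {y}`. -/
def sing3 : Fm3 := .all .z ((mem3 .z .x).iff (Fm3.eq .z .y))

/-- `{x} ∈ y`. -/
def singIn3 : Fm3 := .ex .z ((subst3 sing3 .z .x).and (mem3 .z .y))

/-- `x = {{y}}`. -/
def dsing3 : Fm3 := .ex .z ((subst3 sing3 .z .y).and (subst3 sing3 .x .z))

/-- `x ∈ ∪y`. -/
def inUn3 : Fm3 := .ex .z ((mem3 .x .z).and (mem3 .z .y))

/-- `op(x)`: `x` is an ordered pair. -/
def op3 : Fm3 :=
  (Fm3.ex .y (.all .z ((subst3 singIn3 .z .x).iff (Fm3.eq .y .z)))).and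
    ((Fm3.all .y (.all .z
      ((((subst3 inUn3 .y .x).and (subst3 singIn3 .y .x).not).and
        ((subst3 inUn3 .z .x).and (subst3 singIn3 .z .x).not)).imp (Fm3.eq .y .z)))).and
      (Fm3.all .y (.ex .z ((mem3 .y .x).imp (mem3 .z .y)))))

/-- `p0` in `L3`: "`y` is the first component of the ordered pair `x`". -/
def p03 : Fm3 := op3.and (subst3 singIn3 .y .x)

/-- `p1` in `L3`: "`y` is the second component of the ordered pair `x`". -/
def p13 : Fm3 :=
  op3.and (dsing3.or ((subst3 inUn3 .y .x).and (subst3 singIn3 .y .x).not))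

/-- `π`: the formulas `p03`, `p13` define pairing functions: both are functional
and every two elements are the components of some ordered pair. -/
def piF : Fm3 :=
  (Fm3.all .x (.all .y (.all .z ((p03.and (subst3 p03 .x .z)).imp (Fm3.eq .y .z))))).and
    ((Fm3.all .x (.all .y (.all .z ((p13.and (subst3 p13 .x .z)).imp (Fm3.eq .y .z))))).and
      (Fm3.all .x (.all .y (.ex .z ((subst3 p03 .z .x).and (subst3 p13 .z .y))))))

/-- `π⁺`: `π` strengthened by uniqueness of pairs, equality of the domains of
the two projections, and existence of two distinct elements. -/
def piPlus : Fm3 :=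
  piF.and
    ((Fm3.all .x (.all .y
      ((((Fm3.ex .z ((subst3 p03 .x .z).and (subst3 p03 .y .z))).and
          (Fm3.ex .z ((subst3 p13 .x .z).and (subst3 p13 .y .z)))).imp (Fm3.eq .x .y))))).and
      ((Fm3.all .x ((Fm3.ex .y p03).iff (.ex .y p13))).and
        (Fm3.ex .x (.ex .y (Fm3.eq .x .y).not))))

/- The concrete parameters of `Fmd3` obtained from the definition Δ of `P`. -/

/-- `E := ∀z P(x,y,z)`. -/
def EF : Fmd3 := Fmd3.all .z .P

/-- `D := P(x,y,z) ∧ ¬E`. -/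
def DF : Fmd3 := Fmd3.P.and EF.not

def dxyC : Fmd3 := .ex .z DF
def dxzC : Fmd3 := .ex .y DF

/-- Scaffold parameters (only `dxy`, `dxz` are used by `subst2`/`eqvF`). -/
def P0 : Params := ⟨dxyC, dxzC, Fmd3.P, Fmd3.P⟩

/-- `u inn v := E⟨u,v⟩`. -/
def innF (u v : Var) : Fmd3 := subst2 P0 EF u v

/-- `x ≐ {y}`. -/
def singF : Fmd3 := .all .z ((innF .z .x).iff (eqvF P0 .z .y))

/-- `{x} inn y`. -/
def singInF : Fmd3 := .ex .z ((subst2 P0 singF .z .x).and (innF .z .y))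

/-- `x ≐ {{y}}`. -/
def dsingF : Fmd3 := .ex .z ((subst2 P0 singF .z .y).and (subst2 P0 singF .x .z))

/-- `x inn ∪y`. -/
def inUnF : Fmd3 := .ex .z ((innF .x .z).and (innF .z .y))

/-- `op(x)` in `Fmd3`. -/
def opF : Fmd3 :=
  (Fmd3.ex .y (.all .z ((subst2 P0 singInF .z .x).iff (eqvF P0 .y .z)))).and
    ((Fmd3.all .y (.all .z
      ((((subst2 P0 inUnF .y .x).and (subst2 P0 singInF .y .x).not).and
        ((subst2 P0 inUnF .z .x).and (subst2 P0 singInF .z .x).not)).imp (eqvF P0 .y .z)))).and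
      (Fmd3.all .y (.ex .z ((innF .y .x).imp (innF .z .y)))))

/-- The concrete parameter `p0` of `Fmd3`. -/
def p0C : Fmd3 := opF.and (subst2 P0 singInF .y .x)

/-- The concrete parameter `p1` of `Fmd3`. -/
def p1C : Fmd3 :=
  opF.and (dsingF.or ((subst2 P0 inUnF .y .x).and (subst2 P0 singInF .y .x).not))

/-- The concrete choice of the parameters `δxy, δxz, p0, p1`. -/
def cP : Params := ⟨dxyC, dxzC, p0C, p1C⟩

/-- `φ⟨x_i, x_j⟩ := ∃y∃z(y ≐ x_i ∧ z ≐ x_j ∧ φ⟨y,z⟩)` for `φ ∈ Fmd3²`. -/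
def substXX (φ : Fmd3) (i j : List Bool) : Fmd3 :=
  .ex .y (.ex .z ((peq cP .y [] .x i).and ((peq cP .z [] .x j).and (subst2 cP φ .y .z))))

def idx : Var → Fin 3
  | .x => 0
  | .y => 1
  | .z => 2

/-- The homomorphism `h'` from the formula algebra of `L3` into `Dca`. -/
def hprime : Fm3 → Fmd3
  | .mem => substXX EF (true :: dgt 0) (true :: dgt 1)
  | .eq u v => dijF cP (idx u) (idx v)
  | .or a b => (hprime a).or (hprime b)
  | .not a => negC cP (hprime a)
  | .ex v a => ciF cP (idx v) (hprime a)

/-- `Triplet x_1` (with the concrete parameters). -/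
def TripX1 : Fmd3 := appX cP (TripletF cP) [true]

/-- `SAx* := SAx ∧ ∀x(Triplet x_1 → h'(π⁺))`. -/
def SAxStar : Fmd3 := (SAxF cP).and (.all .x (TripX1.imp (hprime piPlus)))

/-- The translation `h : Fm3 → Fmd3⁰`. -/
def hmap (φ : Fm3) : Fmd3 := .all .x ((SAxStar.and TripX1).imp (hprime φ))

/- The first-order language Lω of set theory (equality and one binary relation
symbol ∈), its semantics, a standard Gödel numbering, and the ZF(C) axioms. -/

inductive FmW : Type
  | mem : Nat → Nat → FmW
  | eq : Nat → Nat → FmW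
  | or : FmW → FmW → FmW
  | not : FmW → FmW
  | ex : Nat → FmW → FmW
deriving DecidableEq

namespace FmW

def and (φ ψ : FmW) : FmW := .not (.or (.not φ) (.not ψ))

def imp (φ ψ : FmW) : FmW := .or (.not φ) ψ

def iff (φ ψ : FmW) : FmW := (φ.imp ψ).and (ψ.imp φ)

def all (v : Nat) (φ : FmW) : FmW := .not (.ex v (.not φ))

def freeVars : FmW → Finset Nat
  | .mem i j => {i, j}
  | .eq i j => {i, j}
  | .or a b => a.freeVars ∪ b.freeVars
  | .not a => a.freeVars
  | .ex v a => a.freeVars.erase v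

def IsSentence (φ : FmW) : Prop := φ.freeVars = ∅

def Sat (M : Type) (E : M → M → Prop) : FmW → (Nat → M) → Prop
  | .mem i j, e => E (e i) (e j)
  | .eq i j, e => e i = e j
  | .or a b, e => Sat M E a e ∨ Sat M E b e
  | .not a, e => ¬ Sat M E a e
  | .ex v a, e => ∃ m : M, Sat M E a (Function.update e v m)

def encode : FmW → Nat
  | .mem i j => 5 * Nat.pair i j
  | .eq i j => 5 * Nat.pair i j + 1
  | .or a b => 5 * Nat.pair a.encode b.encode + 2
  | .not a => 5 * a.encode + 3
  | .ex v a => 5 * Nat.pair v a.encode + 4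

/-- Universal closure. -/
def closure (φ : FmW) : FmW := (φ.freeVars.sort (· ≤ ·)).foldr FmW.all φ

end FmW

/-- First-order semantic consequence for `Lω`. -/
def SemConsW (T : Set FmW) (φ : FmW) : Prop :=
  ∀ (M : Type) (_ : Nonempty M) (E : M → M → Prop),
    (∀ ψ ∈ T, ∀ e : Nat → M, ψ.Sat M E e) → ∀ e : Nat → M, φ.Sat M E e

/-- A recursive set of `Lω`-formulas. -/
def RecSetW (S : Set FmW) : Prop :=
  ∃ g : Nat → Bool, Computable g ∧ ∀ φ : FmW, φ ∈ S ↔ g φ.encode = true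

namespace ZFCax

open FmW

def extAx : FmW := all 0 (all 1 ((all 2 ((mem 2 0).iff (mem 2 1))).imp (eq 0 1)))

def pairAx : FmW :=
  all 0 (all 1 (ex 2 (all 3 ((mem 3 2).iff ((eq 3 0).or (eq 3 1))))))

def unionAx : FmW :=
  all 0 (ex 1 (all 2 ((mem 2 1).iff (ex 3 ((mem 2 3).and (mem 3 0))))))

def powerAx : FmW :=
  all 0 (ex 1 (all 2 ((mem 2 1).iff (all 3 ((mem 3 2).imp (mem 3 0))))))

def inftyAx : FmW :=
  ex 0 ((ex 1 ((mem 1 0).and (all 2 (mem 2 1).not))).and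
    (all 1 ((mem 1 0).imp
      (ex 2 ((mem 2 0).and (all 3 ((mem 3 2).iff ((mem 3 1).or (eq 3 1)))))))))

def foundAx : FmW :=
  all 0 ((ex 1 (mem 1 0)).imp
    (ex 1 ((mem 1 0).and (ex 2 ((mem 2 1).and (mem 2 0))).not)))

/-- Separation scheme, universally closed over the parameters. -/
def sepAx (φ : FmW) (x a b : Nat) : FmW :=
  closure (FmW.all a (FmW.ex b (FmW.all x ((mem x b).iff ((mem x a).and φ)))))

/-- Replacement scheme, universally closed over the parameters. -/
def replAx (φ : FmW) (x y y' a b : Nat) : FmW :=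
  closure (FmW.all a (FmW.imp
    (FmW.all x (FmW.imp (mem x a) (FmW.ex y' (FmW.all y (FmW.iff φ (eq y y'))))))
    (FmW.ex b (FmW.all x (FmW.imp (mem x a) (FmW.ex y (FmW.and (mem y b) φ)))))))

/-- The axiom of choice. -/
def choiceAx : FmW :=
  all 0 ((((all 1 ((mem 1 0).imp (ex 2 (mem 2 1))))).and
      (all 1 (all 2
        (((mem 1 0).and ((mem 2 0).and (ex 3 ((mem 3 1).and (mem 3 2))))).imp (eq 1 2))))).imp
    (ex 1 (all 2 ((mem 2 0).imp
      (ex 3 (all 4 (((mem 4 2).and (mem 4 1)).iff (eq 4 3))))))))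

end ZFCax

/-- The axiom set of `ZF`. -/
def ZFset : Set FmW :=
  ({ZFCax.extAx, ZFCax.pairAx, ZFCax.unionAx, ZFCax.powerAx, ZFCax.inftyAx,
      ZFCax.foundAx} : Set FmW) ∪
    {ψ | ∃ (φ : FmW) (x a b : Nat), a ≠ x ∧ b ≠ x ∧ a ≠ b ∧
        a ∉ φ.freeVars ∧ b ∉ φ.freeVars ∧ ψ = ZFCax.sepAx φ x a b} ∪
    {ψ | ∃ (φ : FmW) (x y y' a b : Nat),
        List.Pairwise (· ≠ ·) [x, y, y', a, b] ∧
        y' ∉ φ.freeVars ∧ a ∉ φ.freeVars ∧ b ∉ φ.freeVars ∧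
        ψ = ZFCax.replAx φ x y y' a b}

/-- The axiom set of `ZFC`. -/
def ZFCset : Set FmW := ZFset ∪ {ZFCax.choiceAx}

/-- `f : FmW → Fm3` is recursive w.r.t. the standard Gödel numberings. -/
def RecFnW3 (f : FmW → Fm3) : Prop :=
  ∃ g : Nat → Nat, Computable g ∧ ∀ φ : FmW, g φ.encode = (f φ).encode


/-! `h(φ) = ∀x(SAx* ∧ Triplet x₁ → h'(φ))`, and `h'` sends `∨`, `¬` to the Boolean
operations relativised to `X := Triplet x₁`. Under the guard `SAx* ∧ X` the relativisation is
invisible, so the clauses for `∧` and `→` are propositional tautologies pushed under `∀x`.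
For `¬` the guard must be satisfiable, otherwise `h(φ)` and `h(¬φ)` both hold vacuously.
`SAx*` contains `Ax`, and `Ax ⊢ ∃x Triplet x₁` by iterated pairing: from any `x` form
`z := (x, x)`, `y := (z, z)` and `(y, y)`; each pairing makes one more projection defined,
until `x₁₁₁` is. -/

namespace Fmd3

section Tautologies

variable (a b c d : Fmd3)

theorem taut_imp_self : Taut (a.imp a) := by
  intro v hor hnot; simp only [Fmd3.imp, hor, hnot]; cases v a <;> rfl

theorem taut_const : Taut (b.imp (a.imp b)) := by
  intro v hor hnot; simp only [Fmd3.imp, hor, hnot]; cases v a <;> cases v b <;> rfl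

theorem taut_double_neg : Taut (a.imp a.not.not) := by
  intro v hor hnot; simp only [Fmd3.imp, hor, hnot]; cases v a <;> rfl

theorem taut_and_left : Taut ((a.and b).imp a) := by
  intro v hor hnot; simp only [Fmd3.and, Fmd3.imp, hor, hnot]; cases v a <;> cases v b <;> rfl

theorem taut_and_right : Taut ((a.and b).imp b) := by
  intro v hor hnot; simp only [Fmd3.and, Fmd3.imp, hor, hnot]; cases v a <;> cases v b <;> rfl

theorem taut_and_intro : Taut (a.imp (b.imp (a.and b))) := by
  intro v hor hnot; simp only [Fmd3.and, Fmd3.imp, hor, hnot]; cases v a <;> cases v b <;> rfl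

theorem taut_and_comm : Taut ((a.and b).imp (b.and a)) := by
  intro v hor hnot; simp only [Fmd3.and, Fmd3.imp, hor, hnot]; cases v a <;> cases v b <;> rfl

theorem taut_imp_trans : Taut ((a.imp b).imp ((b.imp c).imp (a.imp c))) := by
  intro v hor hnot; simp only [Fmd3.imp, hor, hnot]
  cases v a <;> cases v b <;> cases v c <;> rfl

theorem taut_imp_and : Taut ((a.imp b).imp ((a.imp c).imp (a.imp (b.and c)))) := by
  intro v hor hnot; simp only [Fmd3.and, Fmd3.imp, hor, hnot]
  cases v a <;> cases v b <;> cases v c <;> rfl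

theorem taut_curry : Taut (((a.and b).imp c).imp (a.imp (b.imp c))) := by
  intro v hor hnot; simp only [Fmd3.and, Fmd3.imp, hor, hnot]
  cases v a <;> cases v b <;> cases v c <;> rfl

theorem taut_uncurry : Taut ((a.imp (b.imp c)).imp ((a.and b).imp c)) := by
  intro v hor hnot; simp only [Fmd3.and, Fmd3.imp, hor, hnot]
  cases v a <;> cases v b <;> cases v c <;> rfl

theorem taut_contrapose : Taut ((a.imp b).imp (b.not.imp a.not)) := by
  intro v hor hnot; simp only [Fmd3.imp, hor, hnot]; cases v a <;> cases v b <;> rfl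

theorem taut_or_mono : Taut ((a.imp b).imp ((c.imp d).imp ((a.or c).imp (b.or d)))) := by
  intro v hor hnot; simp only [Fmd3.imp, hor, hnot]
  cases v a <;> cases v b <;> cases v c <;> cases v d <;> rfl

theorem taut_iff_trans : Taut ((a.iff b).imp ((b.iff c).imp (a.iff c))) := by
  intro v hor hnot; simp only [Fmd3.iff, Fmd3.and, Fmd3.imp, hor, hnot]
  cases v a <;> cases v b <;> cases v c <;> rfl

theorem taut_not_congr : Taut ((a.iff b).imp (a.not.iff b.not)) := by
  intro v hor hnot; simp only [Fmd3.iff, Fmd3.and, Fmd3.imp, hor, hnot]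
  cases v a <;> cases v b <;> rfl

theorem taut_not_and : Taut ((a.and b).not.iff (a.not.or b.not)) := by
  intro v hor hnot; simp only [Fmd3.iff, Fmd3.and, Fmd3.imp, hor, hnot]
  cases v a <;> cases v b <;> rfl

theorem taut_not_congr_or : Taut ((a.iff (b.or c)).imp (a.not.iff (b.not.and c.not))) := by
  intro v hor hnot; simp only [Fmd3.iff, Fmd3.and, Fmd3.imp, hor, hnot]
  cases v a <;> cases v b <;> cases v c <;> rfl

theorem taut_imp_and_self : Taut (((a.imp b).and a).imp b) := by
  intro v hor hnot; simp only [Fmd3.and, Fmd3.imp, hor, hnot]; cases v a <;> cases v b <;> rfl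

theorem taut_excluded_middle : Taut (a.or a.not) := by
  intro v hor hnot; simp only [hor, hnot]; cases v a <;> rfl

end Tautologies

end Fmd3

namespace Prf

open Fmd3

variable {T : Set Fmd3} {a b c d : Fmd3}

theorem mp_taut (t : Taut (a.imp b)) (h : Prf T a) : Prf T b := mp (taut t) h

theorem mp₂_taut (t : Taut (a.imp (b.imp c))) (ha : Prf T a) (hb : Prf T b) : Prf T c :=
  mp (mp (taut t) ha) hb

theorem imp_self : Prf T (a.imp a) := taut (taut_imp_self a)

theorem imp_const (hb : Prf T b) : Prf T (a.imp b) := mp_taut (taut_const a b) hb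

theorem and_left : Prf T ((a.and b).imp a) := taut (taut_and_left a b)

theorem and_right : Prf T ((a.and b).imp b) := taut (taut_and_right a b)

theorem and_intro (ha : Prf T a) (hb : Prf T b) : Prf T (a.and b) :=
  mp₂_taut (taut_and_intro a b) ha hb

theorem and_comm : Prf T ((a.and b).imp (b.and a)) := taut (taut_and_comm a b)

theorem imp_trans (hab : Prf T (a.imp b)) (hbc : Prf T (b.imp c)) : Prf T (a.imp c) :=
  mp₂_taut (taut_imp_trans a b c) hab hbc

theorem imp_and (hb : Prf T (a.imp b)) (hc : Prf T (a.imp c)) : Prf T (a.imp (b.and c)) :=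
  mp₂_taut (taut_imp_and a b c) hb hc

theorem curry (h : Prf T ((a.and b).imp c)) : Prf T (a.imp (b.imp c)) :=
  mp_taut (taut_curry a b c) h

theorem uncurry (h : Prf T (a.imp (b.imp c))) : Prf T ((a.and b).imp c) :=
  mp_taut (taut_uncurry a b c) h

theorem contrapose (h : Prf T (a.imp b)) : Prf T (b.not.imp a.not) :=
  mp_taut (taut_contrapose a b) h

theorem or_mono (hab : Prf T (a.imp b)) (hcd : Prf T (c.imp d)) :
    Prf T ((a.or c).imp (b.or d)) :=
  mp₂_taut (taut_or_mono a b c d) hab hcd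

theorem iff_intro (hab : Prf T (a.imp b)) (hba : Prf T (b.imp a)) : Prf T (a.iff b) :=
  and_intro hab hba

theorem iff_mp (h : Prf T (a.iff b)) : Prf T (a.imp b) := mp and_left h

theorem iff_mpr (h : Prf T (a.iff b)) : Prf T (b.imp a) := mp and_right h

theorem iff_trans (hab : Prf T (a.iff b)) (hbc : Prf T (b.iff c)) : Prf T (a.iff c) :=
  mp₂_taut (taut_iff_trans a b c) hab hbc

theorem not_congr (h : Prf T (a.iff b)) : Prf T (a.not.iff b.not) :=
  mp_taut (taut_not_congr a b) h

theorem ex_mono (v : Var) (h : Prf T (a.imp b)) : Prf T ((ex v a).imp (ex v b)) :=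
  mp (ax2 v a b) (gen v h)

theorem ex_congr (v : Var) (h : Prf T (a.iff b)) : Prf T ((ex v a).iff (ex v b)) :=
  iff_intro (ex_mono v (iff_mp h)) (ex_mono v (iff_mpr h))

theorem all_mono (v : Var) (h : Prf T (a.imp b)) : Prf T ((all v a).imp (all v b)) :=
  contrapose (ex_mono v (contrapose h))

theorem all_congr (v : Var) (h : Prf T (a.iff b)) : Prf T ((all v a).iff (all v b)) :=
  iff_intro (all_mono v (iff_mp h)) (all_mono v (iff_mpr h))

theorem all_and (v : Var) : Prf T ((all v (a.and b)).iff ((all v a).and (all v b))) := by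
  have hnot : Prf T ((ex v (a.and b).not).iff ((ex v a.not).or (ex v b.not))) :=
    iff_trans (ex_congr v (taut (taut_not_and a b))) (ax5 v a.not b.not)
  exact mp_taut (taut_not_congr_or _ _ _) hnot

theorem all_imp_all (v : Var) : Prf T ((all v (a.imp b)).imp ((all v a).imp (all v b))) :=
  curry (imp_trans (iff_mpr (all_and v)) (all_mono v (taut (taut_imp_and_self a b))))

theorem ex_not_imp_not (v : Var) (h : Prf T ((ex v a).imp a)) :
    Prf T ((ex v a.not).imp a.not) := by
  have hnot : Prf T (a.not.iff (ex v a).not) := not_congr (iff_intro (ax3 v a) h)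
  exact imp_trans (imp_trans (ex_mono v (iff_mp hnot)) (ax6 v a)) (iff_mpr hnot)

theorem ex_imp_of_not_mem_freeVars {v : Var} :
    ∀ {a : Fmd3}, v ∉ a.freeVars → Prf T ((ex v a).imp a)
  | .P, h => absurd (by cases v <;> simp [freeVars]) h
  | .or a b, h => by
    rw [freeVars, Finset.mem_union, not_or] at h
    exact imp_trans (iff_mp (ax5 v a b))
      (or_mono (ex_imp_of_not_mem_freeVars h.1) (ex_imp_of_not_mem_freeVars h.2))
  | .not a, h => ex_not_imp_not v (ex_imp_of_not_mem_freeVars h)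
  | .ex w a, h => by
    by_cases hvw : v = w
    · subst hvw
      exact ax4 v a
    · have ha : v ∉ a.freeVars := fun ha => h (Finset.mem_erase.2 ⟨hvw, ha⟩)
      exact imp_trans (ax7 v w a) (ex_mono w (ex_imp_of_not_mem_freeVars ha))

theorem and_ex_imp_ex_and {v : Var} (ha : v ∉ a.freeVars) :
    Prf T ((a.and (ex v b)).imp (ex v (a.and b))) := by
  set e := ex v (a.and b)
  have hb : Prf T (b.imp (a.imp e)) := curry (imp_trans and_comm (ax3 v (a.and b)))
  have hex : Prf T ((ex v (a.imp e)).imp (a.imp e)) :=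
    imp_trans (iff_mp (ax5 v a.not e))
      (or_mono (ex_not_imp_not v (ex_imp_of_not_mem_freeVars ha)) (ax4 v (a.and b)))
  exact imp_trans and_comm (uncurry (imp_trans (ex_mono v hb) hex))

theorem imp_ex_of_ex {v : Var} (hex : Prf T (ex v b)) (h : Prf T ((a.and b).imp c))
    (ha : v ∉ a.freeVars) : Prf T (a.imp (ex v c)) :=
  imp_trans (imp_and imp_self (imp_const hex)) (imp_trans (and_ex_imp_ex_and ha) (ex_mono v h))

theorem of_ex_of_imp {v : Var} (hex : Prf T (ex v a)) (h : Prf T (a.imp b))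
    (hb : v ∉ b.freeVars) : Prf T b :=
  mp (imp_trans (ex_mono v h) (ex_imp_of_not_mem_freeVars hb)) hex

end Prf

theorem mem_vars3 (u : Var) : u ∈ vars3 := by
  cases u <;> simp [vars3]

theorem mem_seqsLen (l : List Bool) : l ∈ seqsLen l.length := by
  induction l with
  | nil => simp [seqsLen]
  | cons b l ih => exact List.mem_flatMap.2 ⟨l, ih, by cases b <;> simp⟩

theorem mem_seqH {l : List Bool} (hl : l.length ≤ 3) : l ∈ seqH := by
  have := mem_seqsLen l
  simp only [seqH, List.mem_append]
  interval_cases l.length <;> simp_all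

theorem mem_seqH2 {l : List Bool} (hl : l.length ≤ 2) : l ∈ seqH2 := by
  have := mem_seqsLen l
  simp only [seqH2, List.mem_append]
  interval_cases l.length <;> simp_all

theorem third_comm (u v : Var) : third u v = third v u := by
  cases u <;> cases v <;> rfl

theorem peq_of_ne (P : Params) {u v : Var} (huv : u ≠ v) (i : List Bool) {j : List Bool}
    (hj : j ≠ []) :
    peq P u i v j =
      .ex (third u v) ((peq P u i (third u v) []).and (peq P v j (third u v) [])) := by
  obtain ⟨k, j, rfl⟩ := List.exists_cons_of_ne_nil hj
  cases u <;> cases v <;> cases i <;> simp_all [peq, peqD2, peqDrev, third]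

namespace Prf

open Fmd3

variable {T : Set Fmd3} {P : Params}

theorem of_mem_conjF : ∀ {l : List Fmd3} {a : Fmd3}, Prf T (conjF P l) → a ∈ l → Prf T a
  | [_], _, h, ha => List.mem_singleton.1 ha ▸ h
  | _ :: _ :: _, _, h, ha => (List.mem_cons.1 ha).elim (· ▸ mp and_left h)
      (of_mem_conjF (mp and_right h))

theorem peq_nil_self (u : Var) : Prf T (peq P u [] u []) := by
  cases u <;> exact taut (taut_excluded_middle P.dxy)

theorem peq_trans (hAx : Prf T (AxF P)) {u v w : Var} {i j k : List Bool}
    (hi : i.length ≤ 3 := by decide) (hj : j.length ≤ 3 := by decide)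
    (hk : k.length ≤ 3 := by decide) :
    Prf T (((peq P u i v j).and (peq P v j w k)).imp (peq P u i w k)) :=
  of_mem_conjF hAx <| by
    simp only [axA1, List.mem_append, List.mem_flatMap, List.mem_map]
    exact .inl <| .inl <| .inl ⟨u, mem_vars3 u, v, mem_vars3 v, w, mem_vars3 w, i, mem_seqH hi,
      j, mem_seqH hj, k, mem_seqH hk, rfl⟩

theorem peq_proj_congr (hAx : Prf T (AxF P)) {u v : Var} (i j : List Bool) (k : Bool)
    (hi : i.length ≤ 2 := by decide) (hj : j.length ≤ 2 := by decide) :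
    Prf T (((peq P u i v j).and (peq P u (i ++ [k]) u (i ++ [k]))).imp
      (peq P u (i ++ [k]) v (j ++ [k]))) :=
  of_mem_conjF hAx <| by
    simp only [axA2, List.mem_append, List.mem_flatMap, List.mem_map]
    exact .inl <| .inl <| .inr ⟨u, mem_vars3 u, v, mem_vars3 v, i, mem_seqH2 hi,
      j, mem_seqH2 hj, k, by cases k <;> simp, rfl⟩

theorem ex_pair (hAx : Prf T (AxF P)) {u v w : Var} {i j : List Bool}
    (hwu : w ≠ u := by decide) (hwv : w ≠ v := by decide)
    (hi : i.length ≤ 3 := by decide) (hj : j.length ≤ 3 := by decide) :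
    Prf T (((peq P u i u i).and (peq P v j v j)).imp
      (.ex w ((peq P w [false] u i).and (peq P w [true] v j)))) :=
  of_mem_conjF hAx <| by
    simp only [axA3, List.mem_append, List.mem_flatMap, List.mem_map, List.mem_filter]
    exact .inl <| .inr ⟨u, mem_vars3 u, v, mem_vars3 v, w, ⟨mem_vars3 w, by simp [hwu, hwv]⟩,
      i, mem_seqH hi, j, mem_seqH hj, rfl⟩

theorem ex_peq (hAx : Prf T (AxF P)) (u w : Var) : Prf T (.ex w (peq P u [] w [])) :=
  of_mem_conjF hAx <| by
    simp only [axA4, List.mem_append, List.mem_flatMap, List.mem_map]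
    exact .inr ⟨u, mem_vars3 u, w, mem_vars3 w, rfl⟩

theorem peq_symm {u v : Var} {i j : List Bool} (huv : u ≠ v := by decide)
    (hi : i ≠ [] := by decide) (hj : j ≠ [] := by decide) :
    Prf T ((peq P u i v j).imp (peq P v j u i)) := by
  rw [peq_of_ne P huv i hj, peq_of_ne P huv.symm j hi, third_comm]
  exact ex_mono _ and_comm

theorem peq_symm_nil (hAx : Prf T (AxF P)) {u v : Var} {i : List Bool}
    (hfree : third u v ∉ (peq P u i v []).freeVars) (huv : u ≠ v := by decide)
    (hi : i ≠ [] := by decide) (hi3 : i.length ≤ 3 := by decide) :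
    Prf T ((peq P u i v []).imp (peq P v [] u i)) := by
  rw [peq_of_ne P huv.symm [] hi, third_comm]
  exact imp_ex_of_ex (ex_peq hAx v _) (imp_and and_right (peq_trans hAx hi3)) hfree

theorem peq_self_of_symm (hAx : Prf T (AxF P)) {u v : Var} {i j : List Bool}
    (hsymm : Prf T ((peq P u i v j).imp (peq P v j u i)))
    (hi : i.length ≤ 3 := by decide) (hj : j.length ≤ 3 := by decide) :
    Prf T ((peq P u i v j).imp (peq P u i u i)) :=
  imp_trans (imp_and imp_self hsymm) (peq_trans hAx hi hj hi)

section Triplet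

attribute [local simp] peq peqD2 peqDrev pform subst2 sXZ sYZ sYX sZX sZY sXX sYY sZZ third eqvF
  trueF TripletF Fmd3.and Fmd3.freeVars

theorem ex_proj_defined (hP : GoodParams P) (hAx : Prf T (AxF P)) :
    Prf T (.ex .z (peq P .z [true] .z [true])) := by
  obtain ⟨hxy, hxz, -, hp1⟩ := hP
  have hpair : Prf T (.ex .z ((peq P .z [false] .x []).and (peq P .z [true] .x []))) :=
    mp (ex_pair hAx) (and_intro (peq_nil_self _) (peq_nil_self _))
  have hsymm := peq_symm_nil hAx (u := .z) (v := .x) (i := [true]) (by simp [hxy, hxz, hp1])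
  exact mp (ex_mono .z (imp_trans and_right (peq_self_of_symm hAx hsymm))) hpair

theorem imp_ex_two_proj_defined (hP : GoodParams P) (hAx : Prf T (AxF P)) :
    Prf T ((peq P .z [true] .z [true]).imp
      (.ex .y ((peq P .y [true] .y [true]).and (peq P .y [true, true] .y [true, true])))) := by
  obtain ⟨hxy, hxz, -, hp1⟩ := hP
  set Δ := peq P .z [true] .z [true]
  set Φ := (peq P .y [false] .z []).and (peq P .y [true] .z [])
  have y1z : Prf T ((Δ.and Φ).imp (peq P .y [true] .z [])) := imp_trans and_right and_right
  have zy1 : Prf T ((Δ.and Φ).imp (peq P .z [] .y [true])) :=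
    imp_trans y1z (peq_symm_nil hAx (by simp [hxy, hxz, hp1]))
  have y1y1 : Prf T ((Δ.and Φ).imp (peq P .y [true] .y [true])) :=
    imp_trans (imp_and y1z zy1) (peq_trans hAx)
  have z1y11 : Prf T ((Δ.and Φ).imp (peq P .z [true] .y [true, true])) :=
    imp_trans (imp_and zy1 and_left) (peq_proj_congr hAx [] [true] true)
  have y11z1 : Prf T ((Δ.and Φ).imp (peq P .y [true, true] .z [true])) :=
    imp_trans z1y11 peq_symm
  have y11y11 : Prf T ((Δ.and Φ).imp (peq P .y [true, true] .y [true, true])) :=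
    imp_trans (imp_and y11z1 z1y11) (peq_trans hAx)
  have hpair : Prf T (.ex .y Φ) :=
    mp (ex_pair hAx) (and_intro (peq_nil_self _) (peq_nil_self _))
  exact imp_ex_of_ex hpair (imp_and y1y1 y11y11) (by simp [Δ, hxy, hxz, hp1])

theorem imp_ex_triplet (hP : GoodParams P) (hAx : Prf T (AxF P)) :
    Prf T (((peq P .y [true] .y [true]).and (peq P .y [true, true] .y [true, true])).imp
      (.ex .x ((peq P .x [] .y []).and (TripletF P)))) := by
  obtain ⟨hxy, hxz, -, hp1⟩ := hP
  set Γ := (peq P .y [true] .y [true]).and (peq P .y [true, true] .y [true, true])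
  have yx : Prf T ((Γ.and (peq P .y [] .x [])).imp (peq P .y [] .x [])) := and_right
  have y1x1 : Prf T ((Γ.and (peq P .y [] .x [])).imp (peq P .y [true] .x [true])) :=
    imp_trans (imp_and yx (imp_trans and_left and_left)) (peq_proj_congr hAx [] [] true)
  have y11x11 : Prf T ((Γ.and (peq P .y [] .x [])).imp (peq P .y [true, true] .x [true, true])) :=
    imp_trans (imp_and y1x1 (imp_trans and_left and_right))
      (peq_proj_congr hAx [true] [true] true)
  have x11y11 : Prf T ((Γ.and (peq P .y [] .x [])).imp (peq P .x [true, true] .y [true, true])) :=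
    imp_trans y11x11 peq_symm
  have htrip : Prf T ((Γ.and (peq P .y [] .x [])).imp (TripletF P)) :=
    imp_trans (imp_and x11y11 y11x11) (peq_trans hAx)
  exact imp_ex_of_ex (ex_peq hAx _ _) (imp_and yx htrip) (by simp [Γ, hxy, hxz, hp1])

theorem ex_triplet_proj (hP : GoodParams P) (hAx : Prf T (AxF P)) :
    Prf T (.ex .x (appX P (TripletF P) [true])) := by
  have ⟨hxy, hxz, _, hp1⟩ := hP
  set Γ := (peq P .y [true] .y [true]).and (peq P .y [true, true] .y [true, true])
  set Φ := (peq P .x [false] .y []).and (peq P .x [true] .y [])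
  have yx1 : Prf T ((Γ.and Φ).imp (peq P .y [] .x [true])) :=
    imp_trans (imp_trans and_right and_right)
      (peq_symm_nil hAx (by simp [hp1]))
  have hpair : Prf T (.ex .x Φ) :=
    mp (ex_pair hAx) (and_intro (peq_nil_self _) (peq_nil_self _))
  have hΓ : Prf T (Γ.imp (.ex .x ((peq P .y [] .x [true]).and
      (.ex .x ((peq P .x [] .y []).and (TripletF P)))))) :=
    imp_ex_of_ex hpair (imp_and yx1 (imp_trans and_left (imp_ex_triplet hP hAx)))
      (by simp [Γ, hxy, hxz, hp1])
  have h := of_ex_of_imp (ex_proj_defined hP hAx)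
    (imp_trans (imp_ex_two_proj_defined hP hAx) (ex_mono .y hΓ)) (by simp [hxy, hxz, hp1])
  exact mp (ax7 .y .x _) h

end Triplet

end Prf

theorem goodParams_cP : GoodParams cP := by
  unfold GoodParams
  decide

theorem FmW.IsSentence.or {φ ψ : FmW} (hφ : φ.IsSentence) (hψ : ψ.IsSentence) :
    (φ.or ψ).IsSentence := by
  simp only [FmW.IsSentence, FmW.freeVars] at *
  rw [hφ, hψ, Finset.union_empty]

namespace Fmd3

section Translation

variable (s x a b c : Fmd3)

theorem taut_guard_and : Taut (((s.and x).imp (x.and ((x.and a.not).or (x.and b.not)).not)).iff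
    (((s.and x).imp a).and ((s.and x).imp b))) := by
  intro v hor hnot; simp only [Fmd3.iff, Fmd3.and, Fmd3.imp, hor, hnot]
  cases v s <;> cases v x <;> cases v a <;> cases v b <;> rfl

theorem taut_guard_imp : Taut (((s.and x).imp ((x.and a.not).or b)).imp
    (((s.and x).imp a).imp ((s.and x).imp b))) := by
  intro v hor hnot; simp only [Fmd3.and, Fmd3.imp, hor, hnot]
  cases v s <;> cases v x <;> cases v a <;> cases v b <;> rfl

theorem taut_guard_not :
    Taut ((((s.and x).imp (x.and a.not)).and ((s.and x).imp a)).imp (s.and x).not) := by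
  intro v hor hnot; simp only [Fmd3.and, Fmd3.imp, hor, hnot]
  cases v s <;> cases v x <;> cases v a <;> rfl

theorem taut_and_imp_not : Taut (((a.and b).imp c.not).imp (c.imp (a.imp b.not))) := by
  intro v hor hnot; simp only [Fmd3.and, Fmd3.imp, hor, hnot]
  cases v a <;> cases v b <;> cases v c <;> rfl

end Translation

end Fmd3

namespace Prf

open Fmd3

variable {T : Set Fmd3}

theorem hmap_and_iff (a b : Fm3) : Prf T ((hmap (a.and b)).iff ((hmap a).and (hmap b))) :=
  iff_trans (all_congr .x (taut (taut_guard_and SAxStar TripX1 (hprime a) (hprime b))))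
    (all_and .x)

theorem hmap_imp_imp (a b : Fm3) : Prf T ((hmap (a.imp b)).imp ((hmap a).imp (hmap b))) :=
  imp_trans (all_mono .x (taut (taut_guard_imp SAxStar TripX1 (hprime a) (hprime b))))
    (all_imp_all .x)

theorem hmap_not_imp_not (a : Fm3) : Prf {SAxStar} ((hmap a.not).imp (hmap a).not) := by
  set c := SAxStar.and TripX1
  have hS : Prf {SAxStar} SAxStar := hyp rfl
  have hX : Prf {SAxStar} (.ex .x TripX1) :=
    ex_triplet_proj goodParams_cP (mp and_left (mp and_left hS))
  have hc : Prf {SAxStar} (.ex .x c.not.not) :=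
    mp (ex_mono .x (imp_trans (imp_and (imp_const hS) imp_self) (taut (taut_double_neg c)))) hX
  have hall : Prf {SAxStar} (((hmap a.not).and (hmap a)).imp (all .x c.not)) :=
    imp_trans (iff_mpr (all_and .x))
      (all_mono .x (taut (taut_guard_not SAxStar TripX1 (hprime a))))
  exact mp₂_taut (taut_and_imp_not _ _ _) hall hc

end Prf

theorem Tr_is_Boolean_preserving_general (f : FmW → Fm3)
    (hfnot : ∀ φ : FmW, φ.IsSentence → f φ.not = (f φ).not)
    (hfor : ∀ φ ψ : FmW, φ.IsSentence → ψ.IsSentence → f (φ.or ψ) = (f φ).or (f ψ)) :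
    (∀ φ ψ : FmW, φ.IsSentence → ψ.IsSentence →
      Prf ∅ ((hmap (f (φ.and ψ))).iff ((hmap (f φ)).and (hmap (f ψ)))) ∧
      Prf ∅ ((hmap (f (φ.imp ψ))).imp ((hmap (f φ)).imp (hmap (f ψ))))) ∧
    (∀ φ : FmW, φ.IsSentence →
      Prf {SAxStar} ((hmap (f φ.not)).imp (hmap (f φ)).not)) := by
  refine ⟨fun φ ψ hφ hψ => ⟨?_, ?_⟩, fun φ hφ => ?_⟩
  · have hand : f (φ.and ψ) = (f φ).and (f ψ) := by
      rw [FmW.and, hfnot (φ.not.or ψ.not) (FmW.IsSentence.or hφ hψ), hfor φ.not ψ.not hφ hψ,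
        hfnot φ hφ, hfnot ψ hψ]
      rfl
    exact hand ▸ Prf.hmap_and_iff (f φ) (f ψ)
  · have himp : f (φ.imp ψ) = (f φ).imp (f ψ) := by
      rw [FmW.imp, hfor φ.not ψ hφ hψ, hfnot φ hφ]
      rfl
    exact himp ▸ Prf.hmap_imp_imp (f φ) (f ψ)
  · exact hfnot φ hφ ▸ Prf.hmap_not_imp_not (f φ)

/-- **Theorem (Tr = h ∘ f is Boolean preserving w.r.t. ⊢d3).** For all
`Lω`-sentences `φ, ψ`: `⊢d3 Tr(φ∧ψ) ↔ (Tr(φ) ∧ Tr(ψ))` and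
`⊢d3 Tr(φ→ψ) → (Tr(φ) → Tr(ψ))`; moreover `SAx* ⊢d3 Tr(¬φ) → ¬Tr(φ)`. -/
theorem Tr_is_Boolean_preserving (f : FmW → Fm3) (hrec : RecFnW3 f)
    (hfsen : ∀ φ : FmW, φ.IsSentence → (f φ).IsSentence)
    (hfsem : ∀ φ : FmW, φ.IsSentence →
      ∀ (M : Type) (_ : Nonempty M) (E : M → M → Prop),
        (∀ e : Var → M, piPlus.Sat M E e) →
        ((∀ e : Nat → M, φ.Sat M E e) ↔ ∀ e : Var → M, (f φ).Sat M E e))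
    (hfnot : ∀ φ : FmW, φ.IsSentence → f φ.not = (f φ).not)
    (hfor : ∀ φ ψ : FmW, φ.IsSentence → ψ.IsSentence → f (φ.or ψ) = (f φ).or (f ψ)) :
    (∀ φ ψ : FmW, φ.IsSentence → ψ.IsSentence →
      Prf ∅ ((hmap (f (φ.and ψ))).iff ((hmap (f φ)).and (hmap (f ψ)))) ∧
      Prf ∅ ((hmap (f (φ.imp ψ))).imp ((hmap (f φ)).imp (hmap (f ψ))))) ∧
    (∀ φ : FmW, φ.IsSentence →
      Prf {SAxStar} ((hmap (f φ.not)).imp (hmap (f φ)).not)) :=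
  Tr_is_Boolean_preserving_general f hfnot hfor
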